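/- Let N_X and N_Y be K-order networks over finite nonempty sets X and Y, both having the symmetry and identity properties, and fix 0 ≤ k ≤ K. Let N_X^k and N_Y^k denote the k-order truncated networks, which keep the same node sets and the relationship functions of orders 0 through k. Then the ∞-norm network distance between the truncated networks equals the k-order network distance between the full networks: d_∞(N_X^k, N_Y^k) = d^k(N_X, N_Y). -/
import Mathlib


/-- The relationship functions of a `K`-order network over node set `X`:
for each order `k`, a real-valued function on `(k+1)`-tuples of nodes
(only the functions of order `k ≤ K` are relevant). -/
abbrev RelFun (X : Type*) : Type _ := (k : ℕ) → (Fin (k + 1) → X) → ℝ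

/-- The relationship functions of orders `0 ≤ k ≤ K` take values in `[0,1]`. -/
def RangeUnit {X : Type*} (K : ℕ) (r : RelFun X) : Prop :=
  ∀ k, k ≤ K → ∀ x : Fin (k + 1) → X, r k x ∈ Set.Icc (0 : ℝ) 1

/-- Symmetry property: the relationship value is invariant under reorderings of the tuple. -/
def SymmetricNet {X : Type*} (K : ℕ) (r : RelFun X) : Prop :=
  ∀ k, k ≤ K → ∀ (x : Fin (k + 1) → X) (σ : Equiv.Perm (Fin (k + 1))),
    r k (x ∘ σ) = r k x

/-- Identity property: a sub-tuple with the same set of distinct elements as the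
full tuple has the same relationship value. -/
def IdentityNet {X : Type*} (K : ℕ) (r : RelFun X) : Prop :=
  ∀ k k', k ≤ K → k' ≤ K → ∀ (x : Fin (k + 1) → X) (l : Fin (k' + 1) → Fin (k + 1)),
    Set.range (x ∘ l) = Set.range x → r k' (x ∘ l) = r k x

/-- A correspondence between `X` and `Y`: a set of pairs covering all of `X` and all of `Y`. -/
def IsCorrespondence {X Y : Type*} (C : Finset (X × Y)) : Prop :=
  (∀ x : X, ∃ y : Y, (x, y) ∈ C) ∧ (∀ y : Y, ∃ x : X, (x, y) ∈ C)

/-- The `k`-order network difference with respect to a correspondence `C`: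
the maximum of `|r_X^k(x_{0:k}) - r_Y^k(y_{0:k})|` over all choices of pairs
`(x_0,y_0), …, (x_k,y_k) ∈ C`. -/
noncomputable def Gamma {X Y : Type*} (rX : RelFun X) (rY : RelFun Y)
    (C : Finset (X × Y)) (k : ℕ) : ℝ :=
  sSup {d : ℝ | ∃ (x : Fin (k + 1) → X) (y : Fin (k + 1) → Y),
    (∀ i, (x i, y i) ∈ C) ∧ d = |rX k x - rY k y|}

/-- The `k`-order network distance: the minimum of `Γ^k(C)` over all correspondences. -/
noncomputable def netDist {X Y : Type*} (rX : RelFun X) (rY : RelFun Y) (k : ℕ) : ℝ :=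
  sInf {d : ℝ | ∃ C : Finset (X × Y), IsCorrespondence C ∧ d = Gamma rX rY C k}

/-- The `∞`-norm network distance of `k`-order networks: the minimum over
correspondences of `max_{0 ≤ l ≤ k} Γ^l(C)`. Applied with the relationship
functions of `K`-order networks, this is the `∞`-norm distance between their
`k`-order truncated networks (which keep the node sets and the relationship
functions of orders `0` through `k`). -/
noncomputable def netDistInf {X Y : Type*} (k : ℕ) (rX : RelFun X) (rY : RelFun Y) : ℝ :=
  sInf {d : ℝ | ∃ C : Finset (X × Y), IsCorrespondence C ∧
    d = ⨆ l : Fin (k + 1), Gamma rX rY C (l : ℕ)}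

lemma gamma_mono {X Y : Type*} (K : ℕ) (rX : RelFun X) (rY : RelFun Y)
    (hRX : RangeUnit K rX) (hIX : IdentityNet K rX)
    (hRY : RangeUnit K rY) (hIY : IdentityNet K rY)
    (C : Finset (X × Y)) (hC : C.Nonempty)
    {l k : ℕ} (hlk : l ≤ k) (hk : k ≤ K) :
    Gamma rX rY C l ≤ Gamma rX rY C k := by
  have hl : l ≤ K := hlk.trans hk
  have hbdd : BddAbove {d : ℝ | ∃ (x : Fin (k + 1) → X) (y : Fin (k + 1) → Y),
      (∀ i, (x i, y i) ∈ C) ∧ d = |rX k x - rY k y|} := by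
    refine ⟨1, ?_⟩
    rintro d ⟨x, y, _, rfl⟩
    have h1 := hRX k hk x
    have h2 := hRY k hk y
    rw [abs_sub_le_iff]
    constructor <;> linarith [h1.1, h1.2, h2.1, h2.2]
  apply csSup_le
  · obtain ⟨⟨x0, y0⟩, hxy⟩ := hC
    exact ⟨_, fun _ => x0, fun _ => y0, fun _ => hxy, rfl⟩
  rintro d ⟨x, y, hxy, rfl⟩
  set g : Fin (k + 1) → Fin (l + 1) := fun i => ⟨min i l, by omega⟩ with hg
  set ι : Fin (l + 1) → Fin (k + 1) := Fin.castLE (by omega) with hι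
  have hgi : ∀ j : Fin (l + 1), g (ι j) = j := by
    intro j
    ext
    simp [hg, hι, Nat.min_eq_left (Nat.le_of_lt_succ j.isLt)]
  have hgg : ∀ i : Fin (k + 1), g (ι (g i)) = g i := by
    intro i
    ext
    simp [hg, hι]
  have hcompX : (x ∘ g) ∘ ι = x := by
    funext j; simp only [Function.comp_apply, hgi]
  have hcompY : (y ∘ g) ∘ ι = y := by
    funext j; simp only [Function.comp_apply, hgi]
  have hrangeX : Set.range ((x ∘ g) ∘ ι) = Set.range (x ∘ g) :=
    Set.Subset.antisymm (fun a ⟨j, hj⟩ => ⟨ι j, hj⟩)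
      (fun a ⟨i, hi⟩ => ⟨g i, by simp only [Function.comp_apply, hgg]; exact hi⟩)
  have hrangeY : Set.range ((y ∘ g) ∘ ι) = Set.range (y ∘ g) :=
    Set.Subset.antisymm (fun a ⟨j, hj⟩ => ⟨ι j, hj⟩)
      (fun a ⟨i, hi⟩ => ⟨g i, by simp only [Function.comp_apply, hgg]; exact hi⟩)
  have hx := hIX k l hk hl (x ∘ g) ι hrangeX
  have hy := hIY k l hk hl (y ∘ g) ι hrangeY
  rw [hcompX] at hx
  rw [hcompY] at hy
  apply le_csSup hbdd
  exact ⟨x ∘ g, y ∘ g, fun i => hxy (g i), by rw [hx, hy]⟩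

/-- For `K`-order networks with the symmetry and identity properties and `k ≤ K`,
the `∞`-norm network distance between the `k`-order truncated networks equals the
`k`-order network distance between the full networks. -/
theorem truncated_netDistInf_eq {X Y : Type*} [Fintype X] [Nonempty X]
    [Fintype Y] [Nonempty Y] (K : ℕ) (rX : RelFun X) (rY : RelFun Y)
    (hRX : RangeUnit K rX) (hSX : SymmetricNet K rX) (hIX : IdentityNet K rX)
    (hRY : RangeUnit K rY) (hSY : SymmetricNet K rY) (hIY : IdentityNet K rY)
    (k : ℕ) (hk : k ≤ K) :
    netDistInf k rX rY = netDist rX rY k := by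
  have hsup : ∀ C : Finset (X × Y), IsCorrespondence C →
      (⨆ l : Fin (k + 1), Gamma rX rY C (l : ℕ)) = Gamma rX rY C k := by
    intro C hCc
    have hCne : C.Nonempty := by
      obtain ⟨x⟩ := (inferInstance : Nonempty X)
      obtain ⟨y, hy⟩ := hCc.1 x
      exact ⟨(x, y), hy⟩
    apply le_antisymm
    · apply ciSup_le
      intro l
      exact gamma_mono K rX rY hRX hIX hRY hIY C hCne (Nat.le_of_lt_succ l.isLt) hk
    · have := le_ciSup (f := fun l : Fin (k + 1) => Gamma rX rY C (l : ℕ))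
        (Set.Finite.bddAbove (Set.finite_range _)) (Fin.last k)
      simpa using this
  unfold netDistInf netDist
  congr 1
  ext d
  simp only [Set.mem_setOf_eq]
  constructor
  · rintro ⟨C, hCc, rfl⟩
    exact ⟨C, hCc, hsup C hCc⟩
  · rintro ⟨C, hCc, rfl⟩
    exact ⟨C, hCc, (hsup C hCc).symm⟩
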